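/- Let (ĉ^l) be a sequence in [0,1) satisfying ĉ^l = (1/(1+λ))·ĉ^{l−1} + (λ/(1+λ))·f(ĉ^{l−1}) with λ > 0, where f is the ReLU correlation function f(c) = (1/π)(c·arcsin(c) + √(1−c²)) + c/2. Then ĉ^l is nondecreasing and converges to 1, and 1 − ĉ^l ~ 4/(η² l²) where η = λβ/(1+λ) and β = 2√2/(3π). -/

import Mathlib

/-! The gap `f(x) - x = (√(1 - x²) - x arccos x) / π` has derivative `-arccos x / π`, so it is
positive on `[-1, 1)`: the recursion strictly increases `ĉ`, and its limit, being a fixed point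
of the continuous step map, must be `1`. L'Hôpital's rule together with the half-angle identity
`1 - x = 2 sin² (arccos x / 2)` gives `f(x) - x ~ β (1 - x)^{3/2}`, so `εₗ = 1 - ĉₗ` satisfies
`εₗ - εₗ₊₁ ~ η εₗ^{3/2}`. Hence the increments of `εₗ^{-1/2}` tend to `η/2`, and by Cesàro
`εₗ^{-1/2} ~ η l / 2`. -/

open Real Set Filter Topology

noncomputable def reluCorr (c : ℝ) : ℝ :=
  (1 / π) * (c * Real.arcsin c + Real.sqrt (1 - c ^ 2)) + c / 2

noncomputable def reluGap (x : ℝ) : ℝ := √(1 - x ^ 2) - x * arccos x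

lemma reluCorr_sub_self (x : ℝ) : reluCorr x - x = reluGap x / π := by
  simp only [reluCorr, reluGap, arccos]
  field_simp
  ring

@[fun_prop]
lemma continuous_reluCorr : Continuous reluCorr := by
  unfold reluCorr
  fun_prop

lemma continuous_reluGap : Continuous reluGap := by
  unfold reluGap
  fun_prop

lemma reluGap_one : reluGap 1 = 0 := by simp [reluGap]

lemma hasDerivAt_reluGap {x : ℝ} (h₁ : -1 < x) (h₂ : x < 1) :
    HasDerivAt reluGap (-arccos x) x := by
  have hx : 0 < 1 - x ^ 2 := by nlinarith
  have hsqrt : HasDerivAt (fun y => √(1 - y ^ 2)) (-(2 * x) / (2 * √(1 - x ^ 2))) x := by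
    simpa using ((hasDerivAt_pow 2 x).const_sub 1).sqrt hx.ne'
  refine (hsqrt.sub ((hasDerivAt_id' x).mul (hasDerivAt_arccos h₁.ne' h₂.ne))).congr_deriv ?_
  field_simp
  ring

lemma strictAntiOn_reluGap : StrictAntiOn reluGap (Icc (-1) 1) := by
  refine strictAntiOn_of_deriv_neg (convex_Icc _ _) continuous_reluGap.continuousOn ?_
  rw [interior_Icc]
  rintro x ⟨h₁, h₂⟩
  rw [(hasDerivAt_reluGap h₁ h₂).deriv, neg_neg_iff_pos]
  exact arccos_pos.2 h₂

lemma lt_reluCorr {x : ℝ} (h₁ : -1 ≤ x) (h₂ : x < 1) : x < reluCorr x := by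
  have hgap : reluGap 1 < reluGap x :=
    strictAntiOn_reluGap ⟨h₁, h₂.le⟩ ⟨by norm_num, le_rfl⟩ h₂
  rw [← sub_pos, reluCorr_sub_self]
  exact div_pos (reluGap_one ▸ hgap) pi_pos

lemma arccos_div_sqrt_one_sub {x : ℝ} (h₁ : -1 ≤ x) (h₂ : x < 1) :
    arccos x / √(1 - x) = √2 / sinc (arccos x / 2) := by
  set θ := arccos x
  have hθ : 0 < θ := arccos_pos.2 h₂
  have hsin : 0 < sin (θ / 2) :=
    sin_pos_of_pos_of_lt_pi (by positivity) (by linarith [arccos_le_pi x, pi_pos])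
  have hsqrt : √(1 - x) = √2 * sin (θ / 2) := by
    rw [← abs_of_pos hsin, abs_sin_half, cos_arccos h₁ h₂.le, ← sqrt_mul zero_le_two]
    ring_nf
  rw [hsqrt, sinc_of_ne_zero (by positivity)]
  field_simp
  norm_num

lemma tendsto_arccos_div_sqrt_one_sub :
    Tendsto (fun x => arccos x / √(1 - x)) (𝓝[<] 1) (𝓝 √2) := by
  have hsinc := (continuous_sinc.comp (continuous_arccos.div_const 2)).tendsto 1
  simp only [Function.comp_def, arccos_one, zero_div, sinc_zero] at hsinc
  have h := (tendsto_const_nhds (x := √2)).div hsinc one_ne_zero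
  rw [div_one] at h
  refine (h.mono_left nhdsWithin_le_nhds).congr' ?_
  filter_upwards [Ioo_mem_nhdsLT (show (-1 : ℝ) < 1 by norm_num)] with x hx
  exact (arccos_div_sqrt_one_sub hx.1.le hx.2).symm

lemma hasDerivAt_one_sub_mul_sqrt_one_sub {x : ℝ} (hx : x < 1) :
    HasDerivAt (fun y => (1 - y) * √(1 - y)) (-(3 / 2) * √(1 - x)) x := by
  have hx' : 0 < 1 - x := sub_pos.2 hx
  have hlin : HasDerivAt (fun y => 1 - y) (-1) x := by simpa using (hasDerivAt_id x).const_sub 1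
  refine (hlin.mul (hlin.sqrt hx'.ne')).congr_deriv ?_
  field_simp
  rw [sq_sqrt hx'.le]
  ring

lemma tendsto_reluGap_div :
    Tendsto (fun x => reluGap x / ((1 - x) * √(1 - x))) (𝓝[<] 1) (𝓝 (2 * √2 / 3)) := by
  have hnear : ∀ᶠ x in 𝓝[<] (1 : ℝ), -1 < x ∧ x < 1 := by
    filter_upwards [Ioo_mem_nhdsLT (show (-1 : ℝ) < 1 by norm_num)] with x hx using hx
  refine HasDerivAt.lhopital_zero_nhdsLT (f' := fun x => -arccos x)
    (g' := fun x => -(3 / 2) * √(1 - x)) ?_ ?_ ?_ ?_ ?_ ?_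
  · filter_upwards [hnear] with x hx using hasDerivAt_reluGap hx.1 hx.2
  · filter_upwards [hnear] with x hx using hasDerivAt_one_sub_mul_sqrt_one_sub hx.2
  · filter_upwards [hnear] with x hx
    have : 0 < √(1 - x) := sqrt_pos.2 (sub_pos.2 hx.2)
    positivity
  · simpa [reluGap_one] using (continuous_reluGap.tendsto 1).mono_left nhdsWithin_le_nhds
  · have : Continuous fun x : ℝ => (1 - x) * √(1 - x) := by fun_prop
    simpa using (this.tendsto 1).mono_left nhdsWithin_le_nhds
  · have h := tendsto_arccos_div_sqrt_one_sub.const_mul (2 / 3)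
    rw [show 2 / 3 * √2 = 2 * √2 / 3 by ring] at h
    refine h.congr' ?_
    filter_upwards [hnear] with x hx
    have : 0 < √(1 - x) := sqrt_pos.2 (sub_pos.2 hx.2)
    field_simp

lemma tendsto_reluCorr_sub_self_div :
    Tendsto (fun x => (reluCorr x - x) / ((1 - x) * √(1 - x))) (𝓝[<] 1)
      (𝓝 (2 * √2 / (3 * π))) := by
  have h := tendsto_reluGap_div.div_const π
  rw [div_div] at h
  refine h.congr fun x => ?_
  rw [reluCorr_sub_self, div_right_comm]

lemma tendsto_div_natCast_of_tendsto_sub {u : ℕ → ℝ} {L : ℝ}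
    (h : Tendsto (fun n => u (n + 1) - u n) atTop (𝓝 L)) :
    Tendsto (fun n : ℕ => u n / n) atTop (𝓝 L) := by
  have hinit : Tendsto (fun n : ℕ => u 0 * (n : ℝ)⁻¹) atTop (𝓝 0) := by
    simpa using tendsto_inv_atTop_nhds_zero_nat.const_mul (u 0)
  refine (zero_add L ▸ hinit.add h.cesaro).congr fun n => ?_
  rw [Finset.sum_range_sub (f := u), div_eq_mul_inv]
  ring

lemma inv_sqrt_sub_inv_sqrt {a b : ℝ} (ha : 0 < a) (hb : 0 < b) :
    1 / √b - 1 / √a = (a - b) / (a * √a) / (√(b / a) * (1 + √(b / a))) := by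
  have hsa : 0 < √a := sqrt_pos.2 ha
  have hsb : 0 < √b := sqrt_pos.2 hb
  rw [sqrt_div hb.le]
  field_simp
  ring_nf
  rw [sq_sqrt ha.le, sq_sqrt hb.le]
  ring

lemma tendsto_inv_sqrt_sub {ε : ℕ → ℝ} {η : ℝ} (hpos : ∀ n, 0 < ε n)
    (hlim : Tendsto ε atTop (𝓝 0))
    (hdiff : Tendsto (fun n => (ε n - ε (n + 1)) / (ε n * √(ε n))) atTop (𝓝 η)) :
    Tendsto (fun n => 1 / √(ε (n + 1)) - 1 / √(ε n)) atTop (𝓝 (η / 2)) := by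
  have hratio : Tendsto (fun n => ε (n + 1) / ε n) atTop (𝓝 1) := by
    have h := tendsto_const_nhds (x := (1 : ℝ)) |>.sub (hdiff.mul hlim.sqrt)
    rw [sqrt_zero, mul_zero, sub_zero] at h
    refine h.congr fun n => ?_
    have hε := hpos n
    have : 0 < √(ε n) := sqrt_pos.2 hε
    field_simp
    ring
  have hs := hratio.sqrt
  rw [sqrt_one] at hs
  have h := hdiff.div (hs.mul ((tendsto_const_nhds (x := (1 : ℝ))).add hs)) (by norm_num)
  norm_num at h
  exact h.congr fun n => (inv_sqrt_sub_inv_sqrt (hpos n) (hpos (n + 1))).symm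

lemma tendsto_mul_sq_of_tendsto_sub_div {ε : ℕ → ℝ} {η : ℝ} (hpos : ∀ n, 0 < ε n)
    (hlim : Tendsto ε atTop (𝓝 0)) (hη : η ≠ 0)
    (hdiff : Tendsto (fun n => (ε n - ε (n + 1)) / (ε n * √(ε n))) atTop (𝓝 η)) :
    Tendsto (fun n : ℕ => ε n * n ^ 2) atTop (𝓝 (4 / η ^ 2)) := by
  have h := ((tendsto_div_natCast_of_tendsto_sub (u := fun n => 1 / √(ε n))
    (tendsto_inv_sqrt_sub hpos hlim hdiff)).inv₀ (by simpa using hη)).pow 2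
  refine (show ((η / 2)⁻¹) ^ 2 = 4 / η ^ 2 by field_simp; norm_num) ▸ h.congr fun n => ?_
  rw [inv_div, div_pow, one_div, inv_pow, div_inv_eq_mul, sq_sqrt (hpos n).le, mul_comm]

lemma isFixedPt_of_tendsto_of_succ_eq {α : Type*} [TopologicalSpace α] [T2Space α]
    {g : α → α} {c : ℕ → α} {y : α} (hc : Tendsto c atTop (𝓝 y)) (hg : ContinuousAt g y)
    (hrec : ∀ n, c (n + 1) = g (c n)) : Function.IsFixedPt g y :=
  tendsto_nhds_unique ((hg.tendsto.comp hc).congr fun n => (hrec n).symm)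
    (hc.comp (tendsto_add_atTop_nat 1))

noncomputable def resnetStep (lam x : ℝ) : ℝ :=
  1 / (1 + lam) * x + lam / (1 + lam) * reluCorr x

lemma resnetStep_sub_self {lam : ℝ} (hlam : 1 + lam ≠ 0) (x : ℝ) :
    resnetStep lam x - x = lam / (1 + lam) * (reluCorr x - x) := by
  simp only [resnetStep]
  field_simp
  ring

lemma continuous_resnetStep (lam : ℝ) : Continuous (resnetStep lam) := by
  unfold resnetStep
  fun_prop

lemma eq_one_of_isFixedPt_resnetStep {lam x : ℝ} (hlam : 0 < lam) (h₁ : -1 ≤ x) (h₂ : x ≤ 1)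
    (hx : Function.IsFixedPt (resnetStep lam) x) : x = 1 := by
  refine h₂.eq_of_not_lt fun hlt => ?_
  have hstep := resnetStep_sub_self (by positivity) x
  rw [hx.eq, sub_self] at hstep
  exact (mul_pos (by positivity) (sub_pos.2 (lt_reluCorr h₁ hlt))).ne hstep

/-- Correlation propagation in a pruned ResNet: the recursion
`ĉ^{l+1} = ĉ^l/(1+λ) + λ f(ĉ^l)/(1+λ)` is nondecreasing, converges to 1, and
`1 − ĉ^l ~ 4/(η² l²)` with `η = λβ/(1+λ)`, `β = 2√2/(3π)`. -/
theorem pruned_resnet_correlation (c : ℕ → ℝ) (lam : ℝ) (hlam : 0 < lam)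
    (hrange : ∀ l, c l ∈ Set.Ico (0 : ℝ) 1)
    (hrec : ∀ l, c (l + 1) = (1 / (1 + lam)) * c l + (lam / (1 + lam)) * reluCorr (c l)) :
    Monotone c ∧ Tendsto c atTop (𝓝 1) ∧
    Tendsto (fun l : ℕ => (1 - c l) * (l : ℝ) ^ 2) atTop
      (𝓝 (4 / (lam * (2 * Real.sqrt 2 / (3 * π)) / (1 + lam)) ^ 2)) := by
  have hstep : ∀ l, c (l + 1) - c l = lam / (1 + lam) * (reluCorr (c l) - c l) := fun l =>
    (hrec l).symm ▸ resnetStep_sub_self (by positivity) (c l)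
  have hmono : Monotone c := monotone_nat_of_le_succ fun l => by
    have hgap := sub_pos.2 (lt_reluCorr (by linarith [(hrange l).1]) (hrange l).2)
    exact sub_nonneg.1 (hstep l ▸ (mul_pos (by positivity) hgap).le)
  obtain ⟨L, hL⟩ : ∃ L, Tendsto c atTop (𝓝 L) :=
    ⟨_, tendsto_atTop_ciSup hmono ⟨1, forall_mem_range.2 fun l => (hrange l).2.le⟩⟩
  obtain rfl : L = 1 := eq_one_of_isFixedPt_resnetStep hlam
    (by linarith [ge_of_tendsto' hL fun l => (hrange l).1])
    (le_of_tendsto' hL fun l => (hrange l).2.le)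
    (isFixedPt_of_tendsto_of_succ_eq hL (continuous_resnetStep lam).continuousAt hrec)
  refine ⟨hmono, hL, tendsto_mul_sq_of_tendsto_sub_div (ε := fun l => 1 - c l)
    (fun l => sub_pos.2 (hrange l).2) (by simpa using hL.const_sub 1) (by positivity) ?_⟩
  have hc : Tendsto c atTop (𝓝[<] 1) :=
    tendsto_nhdsWithin_of_tendsto_nhds_of_eventually_within _ hL
      (Eventually.of_forall fun l => (hrange l).2)
  have h := (tendsto_reluCorr_sub_self_div.comp hc).const_mul (lam / (1 + lam))
  rw [div_mul_eq_mul_div] at h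
  refine h.congr fun l => ?_
  rw [Function.comp_apply, ← mul_div_assoc, ← hstep]
  ring
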